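/- arXiv:2004.09119 — 7 statements merged into one kernel-verified Lean document; each statement's English description precedes it below -/
import Mathlib

section
/- Define sequences (p_n) and (δ_n) by p_1 = (1-p)/2, δ_1 = 0, and for n ≥ 2: p_n = (p + 1/2) Σ_{k1+k2=n-1} p_{k1} p_{k2} - (p/2) Σ_{k1+k2+k3+k4=n-1} p_{k1} p_{k2} p_{k3} p_{k4}, and δ_n = ((1-p)/2) p_{n-1} - (p/2) Σ_{k1+k2+k3=n-1} p_{k1} p_{k2} p_{k3}, where all summation indices range over positive integers. Then p_n = 0 for all even n and δ_n = 0 for all odd n. -/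
open Finset in
/-- Compositions of `n-1` into 2 positive parts. -/
def comp2 (n : ℕ) : Finset (ℕ × ℕ) :=
  ((range n) ×ˢ (range n)).filter fun q => 1 ≤ q.1 ∧ 1 ≤ q.2 ∧ q.1 + q.2 = n - 1

open Finset in
/-- Compositions of `n-1` into 3 positive parts. -/
def comp3 (n : ℕ) : Finset (ℕ × ℕ × ℕ) :=
  ((range n) ×ˢ (range n) ×ˢ (range n)).filter fun q =>
    1 ≤ q.1 ∧ 1 ≤ q.2.1 ∧ 1 ≤ q.2.2 ∧ q.1 + q.2.1 + q.2.2 = n - 1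

open Finset in
/-- Compositions of `n-1` into 4 positive parts. -/
def comp4 (n : ℕ) : Finset (ℕ × ℕ × ℕ × ℕ) :=
  ((range n) ×ˢ (range n) ×ˢ (range n) ×ˢ (range n)).filter fun q =>
    1 ≤ q.1 ∧ 1 ≤ q.2.1 ∧ 1 ≤ q.2.2.1 ∧ 1 ≤ q.2.2.2 ∧ q.1 + q.2.1 + q.2.2.1 + q.2.2.2 = n - 1

theorem stmt_2 (p : ℝ) (hp : p ∈ Set.Icc (0:ℝ) 1) (P D : ℕ → ℝ)
    (hP1 : P 1 = (1 - p) / 2) (hD1 : D 1 = 0)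
    (hPrec : ∀ n, 2 ≤ n →
      P n = (p + 1/2) * ∑ q ∈ comp2 n, P q.1 * P q.2
            - p/2 * ∑ q ∈ comp4 n, P q.1 * P q.2.1 * P q.2.2.1 * P q.2.2.2)
    (hDrec : ∀ n, 2 ≤ n →
      D n = (1 - p)/2 * P (n - 1)
            - p/2 * ∑ q ∈ comp3 n, P q.1 * P q.2.1 * P q.2.2) :
    (∀ n, 1 ≤ n → Even n → P n = 0) ∧ (∀ n, 1 ≤ n → Odd n → D n = 0) := by

  have key : ∀ n, 1 ≤ n → Even n → P n = 0 := by
    intro n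
    induction n using Nat.strong_induction_on with
    | _ n ih =>
      intro h1 he
      rw [Nat.even_iff] at he
      have h2 : 2 ≤ n := by omega
      rw [hPrec n h2]
      have s2 : ∑ q ∈ comp2 n, P q.1 * P q.2 = 0 := by
        apply Finset.sum_eq_zero
        intro q hq
        simp only [comp2, Finset.mem_filter, Finset.mem_product, Finset.mem_range] at hq
        obtain ⟨⟨ha, hb⟩, h1a, h1b, hsum⟩ := hq
        have : q.1 % 2 = 0 ∨ q.2 % 2 = 0 := by omega
        rcases this with h | h
        · rw [ih q.1 ha h1a (Nat.even_iff.mpr h)]; ring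
        · rw [ih q.2 hb h1b (Nat.even_iff.mpr h)]; ring
      have s4 : ∑ q ∈ comp4 n, P q.1 * P q.2.1 * P q.2.2.1 * P q.2.2.2 = 0 := by
        apply Finset.sum_eq_zero
        intro q hq
        simp only [comp4, Finset.mem_filter, Finset.mem_product, Finset.mem_range] at hq
        obtain ⟨⟨ha, hb, hc, hd⟩, h1a, h1b, h1c, h1d, hsum⟩ := hq
        have : q.1 % 2 = 0 ∨ q.2.1 % 2 = 0 ∨ q.2.2.1 % 2 = 0 ∨ q.2.2.2 % 2 = 0 := by omega
        rcases this with h | h | h | h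
        · rw [ih q.1 ha h1a (Nat.even_iff.mpr h)]; ring
        · rw [ih q.2.1 hb h1b (Nat.even_iff.mpr h)]; ring
        · rw [ih q.2.2.1 hc h1c (Nat.even_iff.mpr h)]; ring
        · rw [ih q.2.2.2 hd h1d (Nat.even_iff.mpr h)]; ring
      rw [s2, s4]; ring
  refine ⟨key, ?_⟩
  intro n h1 ho
  rcases eq_or_lt_of_le h1 with h | h
  · rw [← h]; exact hD1
  · have h2 : 2 ≤ n := h
    rw [Nat.odd_iff] at ho
    rw [hDrec n h2]
    have hP : P (n - 1) = 0 := by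
      apply key
      · omega
      · rw [Nat.even_iff]; omega
    have s3 : ∑ q ∈ comp3 n, P q.1 * P q.2.1 * P q.2.2 = 0 := by
      apply Finset.sum_eq_zero
      intro q hq
      simp only [comp3, Finset.mem_filter, Finset.mem_product, Finset.mem_range] at hq
      obtain ⟨⟨ha, hb, hc⟩, h1a, h1b, h1c, hsum⟩ := hq
      have : q.1 % 2 = 0 ∨ q.2.1 % 2 = 0 ∨ q.2.2 % 2 = 0 := by omega
      rcases this with h | h | h
      · have hz := key q.1 h1a (Nat.even_iff.mpr h); rw [hz]; ring
      · have hz := key q.2.1 h1b (Nat.even_iff.mpr h); rw [hz]; ring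
      · have hz := key q.2.2 h1c (Nat.even_iff.mpr h); rw [hz]; ring
    rw [hP, s3]; ring
end

section
/- Let a Dyck path of length 2m (m ≥ 1) be chosen uniformly at random, and let V be its number of visits to 0 (including the initial and final point). Then E[V] = C_{m+1}/C_m = (4m+2)/(m+2). -/
/-!
Marking a visit to `0` of a Dyck path of semilength `m` cuts it into an ordered pair of Dyck
paths of total semilength `m`, and conversely. Hence the total number of visits over all Dyck paths
of semilength `m` is `∑ i, C_i C_{m-i} = C_{m+1}`, so the mean is `C_{m+1} / C_m`, which is
`(4m+2)/(m+2)` by `(m+2) C_{m+1} = (4m+2) C_m`.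
-/

/-- Height of the path after the first `k` steps (`true` = up-step `+1`,
`false` = down-step `-1`). -/
def pathSum {n : ℕ} (v : Fin n → Bool) (k : ℕ) : ℤ :=
  ∑ i ∈ Finset.univ.filter (fun i : Fin n => (i : ℕ) < k), (if v i then (1:ℤ) else -1)

/-- A Dyck path: ends at `0` and stays nonnegative. -/
def IsDyck {n : ℕ} (v : Fin n → Bool) : Prop :=
  pathSum v n = 0 ∧ ∀ k, k ≤ n → 0 ≤ pathSum v k

open Classical in
/-- The finite set of all Dyck paths of length `n`. -/
noncomputable def dyckSet (n : ℕ) : Finset (Fin n → Bool) :=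
  Finset.univ.filter fun v => IsDyck v

/-- Number of visits to `0` (including the initial and final point). -/
def visits {n : ℕ} (v : Fin n → Bool) : ℕ :=
  ((Finset.range (n + 1)).filter fun k => pathSum v k = 0).card

open DyckStep List

namespace DyckWord

def zeroTimes (p : DyckWord) : Finset ℕ :=
  (Finset.range (p.toList.length + 1)).filter
    fun k => (p.toList.take k).count U = (p.toList.take k).count D

lemma take_add_drop (p : DyckWord) (k : ℕ)
    (hk : (p.toList.take k).count U = (p.toList.take k).count D) :
    p.take k hk + p.drop k hk = p := by
  ext1
  exact List.take_append_drop k p.toList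

lemma length_mem_zeroTimes_add (a b : DyckWord) : a.toList.length ∈ (a + b).zeroTimes := by
  have htake : (a + b).toList.take a.toList.length = a.toList := List.take_left
  refine Finset.mem_filter.mpr ⟨Finset.mem_range.mpr ?_, ?_⟩
  · change a.toList.length < (a.toList ++ b.toList).length + 1
    rw [length_append]
    omega
  · rw [htake]
    exact a.count_U_eq_count_D

lemma take_add_length (a b : DyckWord) (h) : (a + b).take a.toList.length h = a := by
  ext1
  exact List.take_left

lemma drop_add_length (a b : DyckWord) (h) : (a + b).drop a.toList.length h = b := by
  ext1
  exact List.drop_left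

lemma length_take_of_mem_zeroTimes {p : DyckWord} {k : ℕ} (hk : k ∈ p.zeroTimes) (h) :
    (p.take k h).toList.length = k :=
  List.length_take_of_le (Nat.lt_succ_iff.mp (Finset.mem_range.mp (Finset.mem_filter.mp hk).1))

lemma count_eq_of_mem_zeroTimes {p : DyckWord} {k : ℕ} (hk : k ∈ p.zeroTimes) :
    (p.toList.take k).count U = (p.toList.take k).count D :=
  (Finset.mem_filter.mp hk).2

lemma semilength_take_add_semilength_drop (p : DyckWord) (k : ℕ) (h) :
    (p.take k h).semilength + (p.drop k h).semilength = p.semilength := by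
  rw [← semilength_add, take_add_drop]

lemma sigma_zeroTimes_ext {n : ℕ} {x y : Σ p : {p : DyckWord // p.semilength = n}, p.1.zeroTimes}
    (hp : x.1.1 = y.1.1) (hk : x.2.1 = y.2.1) : x = y := by
  obtain ⟨⟨p, _⟩, ⟨k, _⟩⟩ := x
  obtain ⟨⟨q, _⟩, ⟨l, _⟩⟩ := y
  dsimp only at hp hk
  subst hp hk
  rfl

lemma sigma_pair_ext {n : ℕ}
    {x y : Σ i : Fin (n + 1), {a : DyckWord // a.semilength = i} ×
      {b : DyckWord // b.semilength = n - i}}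
    (ha : x.2.1.1 = y.2.1.1) (hb : x.2.2.1 = y.2.2.1) : x = y := by
  obtain ⟨⟨i, _⟩, ⟨a, ha'⟩, ⟨b, _⟩⟩ := x
  obtain ⟨⟨j, _⟩, ⟨c, hc'⟩, ⟨d, _⟩⟩ := y
  dsimp only at ha hb ha' hc'
  subst ha hb
  obtain rfl : i = j := ha'.symm.trans hc'
  rfl

def zeroTimesSplitEquiv (n : ℕ) :
    (Σ p : {p : DyckWord // p.semilength = n}, p.1.zeroTimes) ≃
      Σ i : Fin (n + 1),
        {a : DyckWord // a.semilength = i} × {b : DyckWord // b.semilength = n - i} where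
  toFun x :=
    have h := count_eq_of_mem_zeroTimes x.2.2
    have hsum := x.1.2 ▸ semilength_take_add_semilength_drop x.1.1 x.2.1 h
    ⟨⟨(x.1.1.take x.2.1 h).semilength, by omega⟩, ⟨_, rfl⟩,
      ⟨x.1.1.drop x.2.1 h, Nat.eq_sub_of_add_eq' hsum⟩⟩
  invFun y := ⟨⟨y.2.1.1 + y.2.2.1, by rw [semilength_add, y.2.1.2, y.2.2.2]; omega⟩,
    ⟨y.2.1.1.toList.length, length_mem_zeroTimes_add _ _⟩⟩
  left_inv x := sigma_zeroTimes_ext (take_add_drop _ _ _) (length_take_of_mem_zeroTimes x.2.2 _)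
  right_inv y :=
    have h := count_eq_of_mem_zeroTimes (length_mem_zeroTimes_add y.2.1.1 y.2.2.1)
    sigma_pair_ext (take_add_length _ _ h) (drop_add_length _ _ h)

lemma sum_card_zeroTimes (n : ℕ) :
    ∑ p : {p : DyckWord // p.semilength = n}, p.1.zeroTimes.card = catalan (n + 1) := by
  simpa [Fintype.card_sigma, card_dyckWord_semilength_eq_catalan, ← catalan_succ]
    using Fintype.card_congr (zeroTimesSplitEquiv n)

lemma length_eq_two_mul_of_semilength_eq {p : DyckWord} {m : ℕ} (h : p.semilength = m) :
    p.toList.length = 2 * m := by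
  rw [← p.two_mul_semilength_eq_length, h]

end DyckWord

def toSteps {n : ℕ} (v : Fin n → Bool) : List DyckStep :=
  (ofFn v).map fun b => if b then U else D

lemma length_toSteps {n : ℕ} (v : Fin n → Bool) : (toSteps v).length = n := by
  simp [toSteps]

lemma take_toSteps_succ {n : ℕ} (v : Fin n → Bool) {k : ℕ} (hk : k < n) :
    (toSteps v).take (k + 1) = (toSteps v).take k ++ [if v ⟨k, hk⟩ then U else D] := by
  rw [take_add_one, getElem?_eq_getElem (by rwa [length_toSteps])]
  simp [toSteps]

lemma pathSum_succ {n : ℕ} (v : Fin n → Bool) {k : ℕ} (hk : k < n) :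
    pathSum v (k + 1) = pathSum v k + if v ⟨k, hk⟩ then 1 else -1 := by
  have hs : Finset.univ.filter (fun i : Fin n => (i : ℕ) < k + 1)
      = insert ⟨k, hk⟩ (Finset.univ.filter fun i : Fin n => (i : ℕ) < k) := by
    ext i
    simp only [Finset.mem_filter, Finset.mem_univ, true_and, Finset.mem_insert, Fin.ext_iff]
    omega
  rw [pathSum, hs, Finset.sum_insert (by simp), add_comm]
  rfl

lemma pathSum_eq_count_sub_count {n : ℕ} (v : Fin n → Bool) {k : ℕ} (hk : k ≤ n) :
    pathSum v k = ((toSteps v).take k).count U - ((toSteps v).take k).count D := by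
  induction k with
  | zero => simp [pathSum]
  | succ k ih =>
    rw [pathSum_succ v hk, ih (by omega), take_toSteps_succ v hk]
    cases v ⟨k, hk⟩ <;> grind

def toDyck {n : ℕ} (v : Fin n → Bool) (hv : IsDyck v) : DyckWord where
  toList := toSteps v
  count_U_eq_count_D := by
    have h := pathSum_eq_count_sub_count v le_rfl
    rw [hv.1, take_of_length_le (length_toSteps v).le] at h
    omega
  count_D_le_count_U i := by
    rw [take_eq_take_min, length_toSteps]
    have h := pathSum_eq_count_sub_count v (min_le_right i n)
    have := hv.2 _ (min_le_right i n)
    omega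

@[simp]
lemma toList_toDyck {n : ℕ} (v : Fin n → Bool) (hv : IsDyck v) :
    (toDyck v hv).toList = toSteps v :=
  rfl

lemma isDyck_of_toSteps_eq {n : ℕ} (v : Fin n → Bool) (p : DyckWord)
    (h : toSteps v = p.toList) :
    IsDyck v := by
  refine ⟨?_, fun k hk => ?_⟩
  · have := p.count_U_eq_count_D
    rw [pathSum_eq_count_sub_count v le_rfl, h,
      take_of_length_le (h ▸ length_toSteps v).le]
    omega
  · have := p.count_D_le_count_U k
    rw [pathSum_eq_count_sub_count v hk, h]
    omega

def ofDyck {n : ℕ} (p : DyckWord) (h : p.toList.length = n) : Fin n → Bool :=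
  fun i => p.toList[(i : ℕ)] == U

lemma toSteps_ofDyck {n : ℕ} (p : DyckWord) (h : p.toList.length = n) :
    toSteps (ofDyck p h) = p.toList := by
  refine ext_getElem (by rw [length_toSteps, h]) fun i _ hi => ?_
  rcases (p.toList[i]'hi).dichotomy with hU | hD <;> simp [toSteps, ofDyck, *]

lemma ofDyck_toDyck {n : ℕ} (v : Fin n → Bool) (hv : IsDyck v) :
    ofDyck (toDyck v hv) (length_toSteps v) = v := by
  funext i
  cases hvi : v i <;> simp [ofDyck, toDyck, toSteps, hvi]

lemma semilength_toDyck {m : ℕ} (v : Fin (2 * m) → Bool) (hv : IsDyck v) :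
    (toDyck v hv).semilength = m := by
  have h := (toDyck v hv).two_mul_semilength_eq_length
  rw [toList_toDyck, length_toSteps] at h
  omega

def dyckPathEquiv (m : ℕ) :
    {v : Fin (2 * m) → Bool // IsDyck v} ≃ {p : DyckWord // p.semilength = m} where
  toFun v := ⟨toDyck v.1 v.2, semilength_toDyck v.1 v.2⟩
  invFun p := ⟨ofDyck p.1 (DyckWord.length_eq_two_mul_of_semilength_eq p.2),
    isDyck_of_toSteps_eq _ p.1 (toSteps_ofDyck _ _)⟩
  left_inv v := Subtype.ext (ofDyck_toDyck v.1 v.2)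
  right_inv p :=
    Subtype.ext (DyckWord.ext (toSteps_ofDyck _ (DyckWord.length_eq_two_mul_of_semilength_eq p.2)))

lemma visits_eq_card_zeroTimes {n : ℕ} (v : Fin n → Bool) (hv : IsDyck v) :
    visits v = (toDyck v hv).zeroTimes.card := by
  rw [visits, DyckWord.zeroTimes, toList_toDyck, length_toSteps]
  congr 1
  refine Finset.filter_congr fun k hk => ?_
  rw [pathSum_eq_count_sub_count v (Nat.lt_succ_iff.mp (Finset.mem_range.mp hk))]
  omega

lemma sum_dyckSet_eq_sum_dyckWord {M : Type*} [AddCommMonoid M] (m : ℕ)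
    (g : (Fin (2 * m) → Bool) → M) (f : DyckWord → M)
    (hfg : ∀ v (hv : IsDyck v), g v = f (toDyck v hv)) :
    ∑ v ∈ dyckSet (2 * m), g v = ∑ p : {p : DyckWord // p.semilength = m}, f p := by
  classical
  rw [Finset.sum_subtype (p := IsDyck) _ (by simp [dyckSet])]
  exact Fintype.sum_equiv (dyckPathEquiv m) _ _ fun v => hfg v.1 v.2

lemma card_dyckSet (m : ℕ) : (dyckSet (2 * m)).card = catalan m := by
  rw [Finset.card_eq_sum_ones,
    sum_dyckSet_eq_sum_dyckWord m (fun _ => 1) (fun _ => 1) fun _ _ => rfl,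
    ← Finset.card_eq_sum_ones, Finset.card_univ, DyckWord.card_dyckWord_semilength_eq_catalan]

lemma sum_visits_dyckSet (m : ℕ) : ∑ v ∈ dyckSet (2 * m), visits v = catalan (m + 1) := by
  rw [sum_dyckSet_eq_sum_dyckWord m _ (fun p => p.zeroTimes.card) visits_eq_card_zeroTimes,
    DyckWord.sum_card_zeroTimes]

lemma catalan_pos (m : ℕ) : 0 < catalan m := by
  have h := succ_mul_catalan_eq_centralBinom m
  have := Nat.centralBinom_pos m
  exact Nat.pos_of_mul_pos_left (h ▸ this)

lemma add_two_mul_catalan_succ (m : ℕ) :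
    (m + 2) * catalan (m + 1) = (4 * m + 2) * catalan m := by
  apply Nat.eq_of_mul_eq_mul_left m.succ_pos
  calc (m + 1) * ((m + 2) * catalan (m + 1))
      = (m + 1) * ((m + 1 + 1) * catalan (m + 1)) := by ring
    _ = (m + 1) * Nat.centralBinom (m + 1) := by rw [succ_mul_catalan_eq_centralBinom]
    _ = 2 * (2 * m + 1) * ((m + 1) * catalan m) := by
        rw [Nat.succ_mul_centralBinom_succ, succ_mul_catalan_eq_centralBinom]
    _ = (m + 1) * ((4 * m + 2) * catalan m) := by ring

theorem stmt_7_general (m : ℕ) :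
    (∑ v ∈ dyckSet (2*m), (visits v : ℚ)) / ((dyckSet (2*m)).card : ℚ)
        = (catalan (m+1) : ℚ) / (catalan m : ℚ) ∧
      (∑ v ∈ dyckSet (2*m), (visits v : ℚ)) / ((dyckSet (2*m)).card : ℚ)
        = (4*(m:ℚ) + 2) / ((m:ℚ) + 2) := by
  rw [← Nat.cast_sum, sum_visits_dyckSet, card_dyckSet]
  refine ⟨rfl, ?_⟩
  have hC : (catalan m : ℚ) ≠ 0 := by exact_mod_cast (catalan_pos m).ne'
  rw [div_eq_div_iff hC (by positivity), mul_comm]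
  exact_mod_cast add_two_mul_catalan_succ m

theorem stmt_7 (m : ℕ) (hm : 1 ≤ m) :
    (∑ v ∈ dyckSet (2*m), (visits v : ℚ)) / ((dyckSet (2*m)).card : ℚ)
        = (catalan (m+1) : ℚ) / (catalan m : ℚ) ∧
      (∑ v ∈ dyckSet (2*m), (visits v : ℚ)) / ((dyckSet (2*m)).card : ℚ)
        = (4*(m:ℚ) + 2) / ((m:ℚ) + 2) :=
  stmt_7_general m
end

section
/- The number of sequences (v_1,...,v_{2m}) ∈ {−1,+1}^{2m} such that the corresponding particles (all moving, with particle i at position i, velocity v_i, annihilating pairwise upon collision) mutually annihilate completely is the Catalan number C_m. -/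
/-!
Removing an adjacent pair `1, -1` from a velocity sequence is removing a matched pair `()` from
a parenthesis word. Reading `1` as `U` and `-1` as `D`, inserting `UD` anywhere into a Dyck word
gives a Dyck word, so every annihilating sequence is a Dyck word; conversely every Dyck word is
`(x)y` with `x`, `y` shorter Dyck words, and annihilating sequences are closed under this
construction. Dyck words of semilength `m` are counted by `catalan m`.
-/

/-- A configuration of velocities (read left to right) annihilates completely iff it
can be reduced to the empty configuration by repeatedly removing an adjacent pair
consisting of a right-moving particle (`1`) immediately followed by a left-moving
particle (`-1`): such a pair is always the first to collide on its interval. -/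
inductive Annihilates : List ℤ → Prop
  | nil : Annihilates []
  | step (l₁ l₂ : List ℤ) : Annihilates (l₁ ++ l₂) →
      Annihilates (l₁ ++ (1 : ℤ) :: (-1 : ℤ) :: l₂)

open List DyckStep

namespace Annihilates

theorem append {l₁ l₂ : List ℤ} (h₁ : Annihilates l₁) (h₂ : Annihilates l₂) :
    Annihilates (l₁ ++ l₂) := by
  induction h₁ with
  | nil => simpa
  | step a b _ ih => simpa using step a (b ++ l₂) (by simpa using ih)

theorem nest {l : List ℤ} (h : Annihilates l) : Annihilates (1 :: l ++ [-1]) := by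
  induction h with
  | nil => simpa using step [] [] nil
  | step a b _ ih => simpa using step (1 :: a) (b ++ [-1]) (by simpa using ih)

end Annihilates

def DyckStep.toInt : DyckStep → ℤ
  | U => 1
  | D => -1

@[simp] lemma DyckStep.toInt_U : U.toInt = 1 := rfl

@[simp] lemma DyckStep.toInt_D : D.toInt = -1 := rfl

lemma DyckStep.toInt_injective : Function.Injective DyckStep.toInt := by
  intro s t; cases s <;> cases t <;> simp

lemma DyckStep.toInt_mem (s : DyckStep) : s.toInt ∈ ({-1, 1} : Finset ℤ) := by
  cases s <;> simp

namespace DyckWord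

@[simp] lemma toList_zero : (0 : DyckWord).toList = [] := rfl

@[simp] lemma toList_add (p q : DyckWord) : (p + q).toList = p.toList ++ q.toList := rfl

@[simp] lemma toList_nest (p : DyckWord) : p.nest.toList = U :: p.toList ++ [D] := rfl

def splice (p q : DyckWord) (l₁ l₂ : List DyckStep) (h : p.toList = l₁ ++ l₂) : DyckWord where
  toList := l₁ ++ q.toList ++ l₂
  count_U_eq_count_D := by
    have hp := p.count_U_eq_count_D
    rw [h, count_append, count_append] at hp
    simp only [count_append, q.count_U_eq_count_D]
    omega
  count_D_le_count_U i := by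
    have hp k := p.count_D_le_count_U k
    have hq := q.count_D_le_count_U (i - l₁.length)
    simp only [h, append_assoc, take_append, count_append, Nat.sub_sub] at hp hq ⊢
    rcases le_or_gt i l₁.length with hi | hi
    · have h0 : i - l₁.length = 0 := by omega
      have h0' : i - (l₁.length + q.toList.length) = 0 := by omega
      simpa [h0, h0'] using hp i
    rw [take_of_length_le hi.le]
    rcases le_or_gt i (l₁.length + q.toList.length) with hj | hj
    · have h0 : i - (l₁.length + q.toList.length) = 0 := by omega
      have := hp l₁.length
      simp only [h0, take_zero, count_nil, take_length, Nat.sub_self] at this ⊢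
      omega
    · have := hp (i - q.toList.length)
      rw [take_of_length_le (by omega), q.count_U_eq_count_D]
      rw [take_of_length_le (by omega), show i - q.toList.length - l₁.length =
        i - (l₁.length + q.toList.length) by omega] at this
      omega

theorem annihilates_map_toInt (p : DyckWord) : Annihilates (p.toList.map toInt) := by
  rw [← ofTree_toTree p]
  induction p.toTree with
  | nil => exact .nil
  | node _ l r ihl ihr => simpa [ofTree] using ihl.nest.append ihr

-- The default `U` of `getD` is never read when `n = p.toList.length`.
def velocities (p : DyckWord) (n : ℕ) : Fin n → ({-1, 1} : Finset ℤ) :=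
  fun k => ⟨(p.toList.getD k U).toInt, (p.toList.getD k U).toInt_mem⟩

lemma ofFn_velocities {p : DyckWord} {n : ℕ} (h : p.toList.length = n) :
    (List.ofFn fun k => (p.velocities n k : ℤ)) = p.toList.map toInt := by
  subst h
  apply List.ext_getElem <;> simp [velocities]

lemma velocities_eq_iff {p : DyckWord} {n : ℕ} (h : p.toList.length = n)
    (v : Fin n → ({-1, 1} : Finset ℤ)) :
    p.velocities n = v ↔ p.toList.map toInt = List.ofFn fun k => (v k : ℤ) := by
  rw [← ofFn_velocities h, List.ofFn_inj]
  exact (Subtype.val_injective.comp_left).eq_iff.symm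

end DyckWord

theorem Annihilates.exists_dyckWord {l : List ℤ} (h : Annihilates l) :
    ∃ p : DyckWord, p.toList.map toInt = l := by
  induction h with
  | nil => exact ⟨0, rfl⟩
  | step l₁ l₂ _ ih =>
    obtain ⟨p, hp⟩ := ih
    obtain ⟨a₁, a₂, hsplit, rfl, rfl⟩ := map_eq_append_iff.mp hp
    exact ⟨p.splice (DyckWord.nest 0) a₁ a₂ hsplit, by simp [DyckWord.splice]⟩

open Classical in
theorem stmt_9_general (m : ℕ) :
    (Finset.univ.filter fun v : Fin (2*m) → ({-1, 1} : Finset ℤ) =>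
        Annihilates (List.ofFn fun i => (v i : ℤ))).card = catalan m := by
  have hlength (p : {p : DyckWord // p.semilength = m}) : p.1.toList.length = 2 * m := by
    rw [← p.1.two_mul_semilength_eq_length, p.2]
  rw [← DyckWord.card_dyckWord_semilength_eq_catalan, ← Finset.card_univ]
  symm
  refine Finset.card_nbij (fun p => p.1.velocities (2 * m)) ?_ ?_ ?_
  · intro p _
    simpa [DyckWord.ofFn_velocities (hlength p)] using p.1.annihilates_map_toInt
  · intro p _ q _ hpq
    have hmap := (DyckWord.velocities_eq_iff (hlength p) _).mp hpq
    rw [DyckWord.ofFn_velocities (hlength q)] at hmap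
    exact Subtype.ext (DyckWord.ext (map_injective_iff.mpr DyckStep.toInt_injective hmap))
  · intro v hv
    obtain ⟨p, hp⟩ := (Finset.mem_filter.mp hv).2.exists_dyckWord
    have hlen : p.toList.length = 2 * m := by simpa using congrArg length hp
    have hsemi : p.semilength = m := by
      have := p.two_mul_semilength_eq_length
      omega
    exact ⟨⟨p, hsemi⟩, Finset.mem_coe.mpr (Finset.mem_univ _),
      (DyckWord.velocities_eq_iff hlen v).mpr hp⟩

open Classical in
theorem stmt_9 (m : ℕ) (hm : 1 ≤ m) :
    (Finset.univ.filter fun v : Fin (2*m) → ({-1, 1} : Finset ℤ) =>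
        Annihilates (List.ofFn fun i => (v i : ℤ))).card = catalan m :=
  stmt_9_general m
end

section
/- Define p_n by p_1 = (1−p)/2 and, for n ≥ 2, p_n = (p+1/2) Σ_{k1+k2=n−1} p_{k1} p_{k2} − (p/2) Σ_{k1+k2+k3+k4=n−1} p_{k1} p_{k2} p_{k3} p_{k4} (indices positive). Then for every n, the derivative of p_n with respect to p, evaluated at p = 1/4, equals −(4/3)·p_n(1/4). -/
/-!
If `f` and `g` satisfy `f' = c f` and `g' = d g` at a point, then `(f g)' = (c + d) f g` there, and
sums preserve `f' = c f`. Hence if every `P k` with `k < n` satisfies `P k' = c P k` at `a`, the two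
convolution sums in the recursion for `P n` satisfy it with constants `2c` and `4c`, and
`P n' = c P n` follows as soon as `c (a + 1/2) = -1` and `3 a c = -1`. These two conditions
single out `a = 1/4`, `c = -4/3`, and the claim follows by strong induction from `P 1 = (1 - x)/2`.
-/

section

variable {𝕜 : Type*} [NontriviallyNormedField 𝕜] {a c d : 𝕜}

theorem HasDerivAt.mul_of_eq_mul {f g : 𝕜 → 𝕜} (hf : HasDerivAt f (c * f a) a)
    (hg : HasDerivAt g (d * g a) a) :
    HasDerivAt (fun x => f x * g x) ((c + d) * (f a * g a)) a :=
  (hf.mul hg).congr_deriv (by ring)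

theorem HasDerivAt.sum_of_eq_mul {ι : Type*} {s : Finset ι} {f : ι → 𝕜 → 𝕜}
    (h : ∀ i ∈ s, HasDerivAt (f i) (c * f i a) a) :
    HasDerivAt (fun x => ∑ i ∈ s, f i x) (c * ∑ i ∈ s, f i a) a := by
  rw [Finset.mul_sum]
  exact HasDerivAt.fun_sum h

theorem HasDerivAt.recursion_of_eq_mul {S₂ S₄ : 𝕜 → 𝕜} (hac₂ : c * (a + 1/2) = -1)
    (hac₄ : 3 * a * c = -1) (h₂ : HasDerivAt S₂ (2 * c * S₂ a) a)
    (h₄ : HasDerivAt S₄ (4 * c * S₄ a) a) :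
    HasDerivAt (fun x => (x + 1/2) * S₂ x - x/2 * S₄ x)
      (c * ((a + 1/2) * S₂ a - a/2 * S₄ a)) a := by
  refine ((((hasDerivAt_id' a).add_const (1/2)).mul h₂).sub
    (((hasDerivAt_id' a).div_const (2 : 𝕜)).mul h₄)).congr_deriv ?_
  linear_combination S₂ a * hac₂ - S₄ a / 2 * hac₄

end

theorem stmt_11 (P : ℕ → ℝ → ℝ)
    (hP1 : ∀ x : ℝ, P 1 x = (1 - x) / 2)
    (hPrec : ∀ n, 2 ≤ n → ∀ x : ℝ,
      P n x = (x + 1/2) * ∑ q ∈ comp2 n, P q.1 x * P q.2 x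
              - x/2 * ∑ q ∈ comp4 n, P q.1 x * P q.2.1 x * P q.2.2.1 x * P q.2.2.2 x)
    :
    ∀ n, 1 ≤ n → deriv (P n) (1/4) = -(4/3) * P n (1/4) := by
  suffices h : ∀ n, 1 ≤ n → HasDerivAt (P n) (-(4/3) * P n (1/4)) (1/4) from
    fun n hn => (h n hn).deriv
  intro n
  induction n using Nat.strong_induction_on with
  | _ n ih =>
  intro hn
  obtain rfl | hn₂ := hn.eq_or_lt
  · rw [funext hP1]
    exact (((hasDerivAt_id _).const_sub 1).div_const 2).congr_deriv (by norm_num)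
  have h₂ : HasDerivAt (fun x => ∑ q ∈ comp2 n, P q.1 x * P q.2 x)
      (2 * (-(4/3)) * ∑ q ∈ comp2 n, P q.1 (1/4) * P q.2 (1/4)) (1/4) := by
    refine HasDerivAt.sum_of_eq_mul fun q hq => ?_
    simp only [comp2, Finset.mem_filter, Finset.mem_product, Finset.mem_range] at hq
    convert (ih _ hq.1.1 hq.2.1).mul_of_eq_mul (ih _ hq.1.2 hq.2.2.1) using 2
    ring
  have h₄ : HasDerivAt
      (fun x => ∑ q ∈ comp4 n, P q.1 x * P q.2.1 x * P q.2.2.1 x * P q.2.2.2 x)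
      (4 * (-(4/3)) * ∑ q ∈ comp4 n,
        P q.1 (1/4) * P q.2.1 (1/4) * P q.2.2.1 (1/4) * P q.2.2.2 (1/4)) (1/4) := by
    refine HasDerivAt.sum_of_eq_mul fun q hq => ?_
    simp only [comp4, Finset.mem_filter, Finset.mem_product, Finset.mem_range] at hq
    convert (((ih _ hq.1.1 hq.2.1).mul_of_eq_mul (ih _ hq.1.2.1 hq.2.2.1)).mul_of_eq_mul
      (ih _ hq.1.2.2.1 hq.2.2.2.1)).mul_of_eq_mul (ih _ hq.1.2.2.2 hq.2.2.2.2.1) using 2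
    ring
  rw [funext (hPrec n hn₂)]
  exact HasDerivAt.recursion_of_eq_mul (by norm_num) (by norm_num) h₂ h₄
end

section
/- Define p_n by the recursion p_1 = (1−p)/2 and, for n ≥ 2, p_n = (p+1/2) Σ_{k1+k2=n−1} p_{k1} p_{k2} − (p/2) Σ_{k1+k2+k3+k4=n−1} p_{k1} p_{k2} p_{k3} p_{k4}. Then for every n, the polynomial (2/(1−p))·p_n has derivative zero at p = 1/4. -/
/-!
Every `p_n` has logarithmic derivative `-4/3` at `p = 1/4`, the same as `1 - p` (and `p_1`), so
that it cancels against the logarithmic derivative `4/3` of `2/(1 - p)`. The induction works because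
logarithmic derivatives add under products: if all `p_k`, `k < n`, have logarithmic derivative `c`
at `a`, the two sums in the recursion have logarithmic derivatives `2c` and `4c`, and `p_n` again
has logarithmic derivative `c` exactly when `1 + (a + 1/2) c = 0` and `1 + 3 a c = 0`, that is,
for `a = 1/4` and `c = -4/3`.
-/

open Finset

section LogDeriv

variable {𝕜 ι : Type*} [NontriviallyNormedField 𝕜] {f g : 𝕜 → 𝕜} {a c d : 𝕜}

theorem HasDerivAt.mul_of_proportional (hf : HasDerivAt f (c * f a) a)
    (hg : HasDerivAt g (d * g a) a) :
    HasDerivAt (fun x => f x * g x) ((c + d) * (f a * g a)) a :=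
  (hf.mul hg).congr_deriv (by ring)

theorem HasDerivAt.sum_of_proportional {s : Finset ι} {F : ι → 𝕜 → 𝕜}
    (hF : ∀ i ∈ s, HasDerivAt (F i) (c * F i a) a) :
    HasDerivAt (fun x => ∑ i ∈ s, F i x) (c * ∑ i ∈ s, F i a) a := by
  rw [mul_sum]
  exact HasDerivAt.fun_sum hF

end LogDeriv

theorem hasDerivAt_quarter_of_recursion (P : ℕ → ℝ → ℝ)
    (hP1 : ∀ x : ℝ, P 1 x = (1 - x) / 2)
    (hPrec : ∀ n, 2 ≤ n → ∀ x : ℝ,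
      P n x = (x + 1/2) * ∑ q ∈ comp2 n, P q.1 x * P q.2 x
              - x/2 * ∑ q ∈ comp4 n, P q.1 x * P q.2.1 x * P q.2.2.1 x * P q.2.2.2 x)
    (n : ℕ) (hn : 1 ≤ n) :
    HasDerivAt (P n) (-(4/3) * P n (1/4)) (1/4) := by
  induction n using Nat.strong_induction_on with
  | _ n ih =>
  obtain rfl | hn2 : n = 1 ∨ 2 ≤ n := by omega
  · rw [funext hP1]
    exact (((hasDerivAt_id _).const_sub 1).div_const 2).congr_deriv (by norm_num)
  have hS2 : HasDerivAt (fun x => ∑ q ∈ comp2 n, P q.1 x * P q.2 x)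
      (-(8/3) * ∑ q ∈ comp2 n, P q.1 (1/4) * P q.2 (1/4)) (1/4) := by
    refine HasDerivAt.sum_of_proportional fun q hq => ?_
    simp only [comp2, mem_filter, mem_product, mem_range] at hq
    exact ((ih q.1 (by omega) (by omega)).mul_of_proportional
      (ih q.2 (by omega) (by omega))).congr_deriv (by ring)
  have hS4 : HasDerivAt (fun x => ∑ q ∈ comp4 n, P q.1 x * P q.2.1 x * P q.2.2.1 x * P q.2.2.2 x)
      (-(16/3) * ∑ q ∈ comp4 n,
        P q.1 (1/4) * P q.2.1 (1/4) * P q.2.2.1 (1/4) * P q.2.2.2 (1/4)) (1/4) := by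
    refine HasDerivAt.sum_of_proportional fun q hq => ?_
    simp only [comp4, mem_filter, mem_product, mem_range] at hq
    exact ((((ih q.1 (by omega) (by omega)).mul_of_proportional
      (ih q.2.1 (by omega) (by omega))).mul_of_proportional
      (ih q.2.2.1 (by omega) (by omega))).mul_of_proportional
      (ih q.2.2.2 (by omega) (by omega))).congr_deriv (by ring)
  rw [hPrec n hn2 (1/4), funext (hPrec n hn2)]
  exact ((((hasDerivAt_id _).add_const _).fun_mul hS2).sub
    (((hasDerivAt_id _).div_const 2).fun_mul hS4)).congr_deriv (by ring)

theorem stmt_12 (P : ℕ → ℝ → ℝ)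
    (hP1 : ∀ x : ℝ, P 1 x = (1 - x) / 2)
    (hPrec : ∀ n, 2 ≤ n → ∀ x : ℝ,
      P n x = (x + 1/2) * ∑ q ∈ comp2 n, P q.1 x * P q.2 x
              - x/2 * ∑ q ∈ comp4 n, P q.1 x * P q.2.1 x * P q.2.2.1 x * P q.2.2.2 x)
    :
    ∀ n, 1 ≤ n → deriv (fun x : ℝ => 2 / (1 - x) * P n x) (1/4) = 0 := by
  intro n hn
  have hcoeff : HasDerivAt (fun x : ℝ => 2 / (1 - x)) (4/3 * (2 / (1 - 1/4))) (1/4) :=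
    ((hasDerivAt_const _ (2 : ℝ)).fun_div ((hasDerivAt_id _).const_sub 1)
      (by norm_num)).congr_deriv (by norm_num)
  have hprod := hcoeff.mul_of_proportional (hasDerivAt_quarter_of_recursion P hP1 hPrec n hn)
  rw [hprod.deriv]
  norm_num
end

section
/- Let n = 2m+1 with m ≥ 1 and let p_n be the polynomial of the ballistic annihilation recursion (p_1 = (1−p)/2; p_n = (p+1/2) Σ_{k1+k2=n−1} p_{k1}p_{k2} − (p/2) Σ_{k1+...+k4=n−1} p_{k1}p_{k2}p_{k3}p_{k4}). Then p_n(0) = (1/2)·C_m·2^{−2m}, where C_m is the m-th Catalan number. -/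
/-!
At `x = 0` the quartic term of the recursion drops out, leaving
`p_n(0) = ½ ∑_{i + j = n - 1} p_i(0) p_j(0)` with `p_1(0) = ½`. By induction `p_n(0)` vanishes for
even `n`, so only odd-odd pairs contribute, and for `n = 2m + 1` the numbers `2 · 4^m · p_n(0)`
satisfy Catalan's recursion `C_{m+1} = ∑_{i + j = m} C_i C_j`.
-/

open Finset hiding mem_antidiagonal
open Finset.HasAntidiagonal

section AntidiagonalSums

variable {R : Type*} [Semiring R] (f : ℕ → R)

lemma comp2_eq_filter_antidiagonal (n : ℕ) :
    comp2 n = (antidiagonal (n - 1)).filter fun q => 1 ≤ q.1 ∧ 1 ≤ q.2 := by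
  ext ⟨i, j⟩
  simp only [comp2, mem_filter, mem_product, mem_range, mem_antidiagonal]
  omega

lemma sum_comp2_eq_sum_antidiagonal (hf : f 0 = 0) (n : ℕ) :
    ∑ q ∈ comp2 n, f q.1 * f q.2 = ∑ q ∈ antidiagonal (n - 1), f q.1 * f q.2 := by
  rw [comp2_eq_filter_antidiagonal]
  refine sum_filter_of_ne fun q _ hq => ?_
  constructor <;> (by_contra h; simp_all)

variable {f}

lemma sum_antidiagonal_odd_eq_zero (hf : ∀ i, f (2 * i) = 0) (k : ℕ) :
    ∑ q ∈ antidiagonal (2 * k + 1), f q.1 * f q.2 = 0 := by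
  refine sum_eq_zero fun q hq => ?_
  rw [mem_antidiagonal] at hq
  rcases Nat.even_or_odd' q.1 with ⟨i, hi | hi⟩
  · rw [hi, hf, zero_mul]
  · rw [show q.2 = 2 * (k - i) by omega, hf, mul_zero]

lemma sum_antidiagonal_even_eq_sum_odd_parts (hf : ∀ i, f (2 * i) = 0) (k : ℕ) :
    ∑ q ∈ antidiagonal (2 * k + 2), f q.1 * f q.2 =
      ∑ q ∈ antidiagonal k, f (2 * q.1 + 1) * f (2 * q.2 + 1) := by
  set odd : ℕ × ℕ → ℕ × ℕ := fun q => (2 * q.1 + 1, 2 * q.2 + 1)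
  have hodd : Set.InjOn odd (antidiagonal k) := fun q _ r _ h => by
    simp only [odd, Prod.mk.injEq] at h
    exact Prod.ext (by omega) (by omega)
  rw [← sum_image (g := odd) (f := fun q => f q.1 * f q.2) hodd]
  refine (sum_subset (fun q hq => ?_) fun q hq hq' => ?_).symm
  · obtain ⟨r, hr, rfl⟩ := mem_image.mp hq
    rw [mem_antidiagonal] at hr ⊢
    simp only [odd]
    omega
  · rw [mem_antidiagonal] at hq
    rcases Nat.even_or_odd' q.1 with ⟨i, hi | hi⟩
    · simp only [hi, hf, zero_mul]
    rcases Nat.even_or_odd' q.2 with ⟨j, hj | hj⟩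
    · simp only [hj, hf, mul_zero]
    exact absurd (mem_image.mpr ⟨(i, j), mem_antidiagonal.mpr (by omega), by
      simp only [odd, ← hi, ← hj]⟩) hq'

end AntidiagonalSums

noncomputable def pAtZero (n : ℕ) : ℝ :=
  if Even n then 0 else catalan (n / 2) / (2 * 4 ^ (n / 2))

lemma pAtZero_two_mul (k : ℕ) : pAtZero (2 * k) = 0 := by
  simp [pAtZero]

lemma pAtZero_two_mul_add_one (k : ℕ) : pAtZero (2 * k + 1) = catalan k / (2 * 4 ^ k) := by
  have hhalf : (2 * k + 1) / 2 = k := by omega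
  simp [pAtZero, hhalf]

lemma pAtZero_eq_half_sum_comp2 {n : ℕ} (hn : 2 ≤ n) :
    pAtZero n = 1 / 2 * ∑ q ∈ comp2 n, pAtZero q.1 * pAtZero q.2 := by
  rw [sum_comp2_eq_sum_antidiagonal _ (pAtZero_two_mul 0)]
  obtain ⟨k, hk | hk⟩ := Nat.even_or_odd' (n - 2)
  · obtain rfl : n = 2 * k + 2 := by omega
    rw [show 2 * k + 2 - 1 = 2 * k + 1 by omega, sum_antidiagonal_odd_eq_zero pAtZero_two_mul,
      show 2 * k + 2 = 2 * (k + 1) by ring, pAtZero_two_mul, mul_zero]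
  · obtain rfl : n = 2 * (k + 1) + 1 := by omega
    rw [show 2 * (k + 1) + 1 - 1 = 2 * k + 2 by omega,
      sum_antidiagonal_even_eq_sum_odd_parts pAtZero_two_mul, pAtZero_two_mul_add_one,
      catalan_succ', Nat.cast_sum, sum_div, mul_sum]
    refine sum_congr rfl fun q hq => ?_
    rw [mem_antidiagonal] at hq
    rw [pAtZero_two_mul_add_one, pAtZero_two_mul_add_one, ← hq, pow_succ, pow_add]
    push_cast
    field_simp
    ring

lemma eq_pAtZero_of_eq_half_sum_comp2 {a : ℕ → ℝ} (h1 : a 1 = 1 / 2)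
    (hrec : ∀ n, 2 ≤ n → a n = 1 / 2 * ∑ q ∈ comp2 n, a q.1 * a q.2) {n : ℕ} (hn : 1 ≤ n) :
    a n = pAtZero n := by
  induction n using Nat.strong_induction_on with
  | _ n ih =>
  rcases hn.eq_or_lt with rfl | hn
  · simpa [h1] using (pAtZero_two_mul_add_one 0).symm
  · rw [hrec n hn, pAtZero_eq_half_sum_comp2 hn]
    congr 1
    refine sum_congr rfl fun q hq => ?_
    simp only [comp2, mem_filter, mem_product, mem_range] at hq
    rw [ih q.1 (by omega) (by omega), ih q.2 (by omega) (by omega)]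

theorem stmt_14_general (P : ℕ → ℝ → ℝ)
    (hP1 : ∀ x : ℝ, P 1 x = (1 - x) / 2)
    (hPrec : ∀ n, 2 ≤ n → ∀ x : ℝ,
      P n x = (x + 1/2) * ∑ q ∈ comp2 n, P q.1 x * P q.2 x
              - x/2 * ∑ q ∈ comp4 n, P q.1 x * P q.2.1 x * P q.2.2.1 x * P q.2.2.2 x)
    (m : ℕ) :
    P (2*m + 1) 0 = 1/2 * (catalan m : ℝ) * (2:ℝ) ^ (-(2*(m:ℤ))) := by
  have hrec (n : ℕ) (hn : 2 ≤ n) : P n 0 = 1 / 2 * ∑ q ∈ comp2 n, P q.1 0 * P q.2 0 := by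
    simpa using hPrec n hn 0
  rw [eq_pAtZero_of_eq_half_sum_comp2 (a := (P · 0)) (by simp [hP1]) hrec (by omega),
    pAtZero_two_mul_add_one, zpow_neg, zpow_mul, zpow_natCast]
  norm_num
  ring

theorem stmt_14 (P : ℕ → ℝ → ℝ)
    (hP1 : ∀ x : ℝ, P 1 x = (1 - x) / 2)
    (hPrec : ∀ n, 2 ≤ n → ∀ x : ℝ,
      P n x = (x + 1/2) * ∑ q ∈ comp2 n, P q.1 x * P q.2 x
              - x/2 * ∑ q ∈ comp4 n, P q.1 x * P q.2.1 x * P q.2.2.1 x * P q.2.2.2 x)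
    (m : ℕ) (hm : 1 ≤ m) :
    P (2*m + 1) 0 = 1/2 * (catalan m : ℝ) * (2:ℝ) ^ (-(2*(m:ℤ))) :=
  stmt_14_general P hP1 hPrec m
end

section
/- For each nonnegative integer k ≤ (n−1)/2, the function p ↦ p^k (1−p)^{n−k} is monotonically decreasing on the interval [1/2 − 1/(2n), 1]. -/
theorem stmt_16 (n k : ℕ) (hn : 1 ≤ n) (hk : 2 * k ≤ n - 1) :
    AntitoneOn (fun p : ℝ => p^k * (1 - p)^(n - k)) (Set.Icc (1/2 - 1/(2*(n:ℝ))) 1) := by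
  have hkn : k < n := by omega
  have hn0 : (0:ℝ) < n := by exact_mod_cast hn
  have hkR : 2*(k:ℝ) + 1 ≤ (n:ℝ) := by exact_mod_cast (by omega : 2*k + 1 ≤ n)
  have hlb : (0:ℝ) ≤ 1/2 - 1/(2*(n:ℝ)) := by
    rw [sub_nonneg, div_le_div_iff₀ (by positivity) (by norm_num)]
    nlinarith
  apply antitoneOn_of_deriv_nonpos (convex_Icc _ _)
  · exact Continuous.continuousOn (by continuity)
  · intro x hx
    exact DifferentiableAt.differentiableWithinAt (by fun_prop)
  · intro x hx
    rw [interior_Icc] at hx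
    obtain ⟨hx0', hx1⟩ := hx
    have hx0 : 0 < x := lt_of_le_of_lt hlb hx0'
    have hx1' : 0 < 1 - x := by linarith
    have hnx : (k:ℝ) < n * x := by
      have h1 : 1/2 - 1/(2*(n:ℝ)) < x := hx0'
      have h2 : (0:ℝ) < 2*(n:ℝ) := by positivity
      have : (n:ℝ) * (1/2 - 1/(2*(n:ℝ))) = ((n:ℝ) - 1)/2 := by
        field_simp
      nlinarith
    have h1 : HasDerivAt (fun p:ℝ => 1 - p) (-1) x := by
      simpa using (hasDerivAt_id x).const_sub 1
    have h2 : HasDerivAt (fun p:ℝ => (1-p)^(n-k)) ((n-k : ℕ)*(1-x)^(n-k-1) * (-1)) x :=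
      (hasDerivAt_pow (n-k) (1-x)).comp x h1
    have hd : HasDerivAt (fun p:ℝ => p^k * (1-p)^(n-k))
        ((k:ℝ)*x^(k-1) * (1-x)^(n-k) + x^k * ((n-k : ℕ)*(1-x)^(n-k-1) * (-1))) x :=
      (hasDerivAt_pow k x).mul h2
    rw [hd.deriv]
    obtain ⟨m, hm⟩ : ∃ m, n - k = m + 1 := ⟨n - k - 1, by omega⟩
    have hnk : ((n - k : ℕ) : ℝ) = (m:ℝ) + 1 := by rw [hm]; push_cast; ring
    have hmn : (m:ℝ) + 1 + k = n := by
      have : (m + 1 + k : ℕ) = n := by omega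
      exact_mod_cast this
    rw [hm]
    simp only [Nat.add_sub_cancel]
    push_cast
    rcases Nat.eq_zero_or_pos k with hk0 | hk0
    · subst hk0
      simp only [Nat.cast_zero, pow_zero]
      have : (0:ℝ) ≤ ((m:ℝ)+1) * (1-x)^m := by positivity
      nlinarith
    · obtain ⟨j, hj⟩ : ∃ j, k = j + 1 := ⟨k - 1, by omega⟩
      subst hj
      simp only [Nat.add_sub_cancel]
      have hp1 : (0:ℝ) ≤ x^j := by positivity
      have hp2 : (0:ℝ) ≤ (1-x)^m := by positivity
      have key : ((j:ℝ)+1) * (1-x) ≤ ((m:ℝ)+1) * x := by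
        push_cast at hnx hmn ⊢
        nlinarith
      have : ((j:ℝ)+1) * x^j * (1-x)^m * (1-x) ≤ ((m:ℝ)+1) * x^j * (1-x)^m * x := by
        have := mul_le_mul_of_nonneg_left key (mul_nonneg hp1 hp2)
        nlinarith
      have e1 : (1-x)^(m+1) = (1-x)^m*(1-x) := pow_succ _ _
      have e2 : x^(j+1) = x^j*x := pow_succ _ _
      push_cast
      rw [e1, e2]
      nlinarith [this]
end
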